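/- arXiv:1801.03014 — 2 statements merged into one kernel-verified Lean document; each statement's English description precedes it below -/
import Mathlib

section
/- Let Ω = (−1,1) ⊂ ℝ, f(t) = √(1+t²) − 1 for t ∈ ℝ, T₀ ≡ 1, and consider the functional 𝔉[w] = ∫_{−1}^{1} (√(1+|w'|²) − 1 − w') dx for w ∈ W^{1,1}((−1,1)). Then inf_{W^{1,1}((−1,1))} 𝔉 = −2, and there exists no u ∈ W^{1,1}((−1,1)) with 𝔉[u] = −2; i.e., the infimum is not attained. -/
/-!
Adding `1` to the integrand gives `√(1 + t²) - t`, which is strictly positive, so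
`𝔉[w] > -|Ω| = -2` for every `w` with integrable derivative. On the other hand the linear
functions `w = c x` give `𝔉[w] = 2 (√(1 + c²) - 1 - c)`, and `√(1 + c²) - c → 0` as `c → ∞`.
-/

open MeasureTheory

noncomputable section

/-- `u ∈ W^{1,1}((−1,1))` with weak derivative `u'`. -/
def HasWeakDeriv1 (u u' : ℝ → ℝ) : Prop :=
  IntegrableOn u (Set.Ioo (-1 : ℝ) 1) volume ∧
  IntegrableOn u' (Set.Ioo (-1 : ℝ) 1) volume ∧
  ∀ φ : ℝ → ℝ, ContDiff ℝ 1 φ → HasCompactSupport φ →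
    tsupport φ ⊆ Set.Ioo (-1 : ℝ) 1 →
    ∫ x in Set.Ioo (-1 : ℝ) 1, u x * deriv φ x =
      - ∫ x in Set.Ioo (-1 : ℝ) 1, u' x * φ x

/-- The functional `𝔉[w] = ∫_{−1}^{1} (√(1+|w'|²) − 1 − w') dx`. -/
noncomputable def exFunctional (u' : ℝ → ℝ) : ℝ :=
  ∫ x in Set.Ioo (-1 : ℝ) 1, (Real.sqrt (1 + (u' x) ^ 2) - 1 - u' x)

open Filter Topology Set

namespace Real

lemma lt_sqrt_one_add_sq (t : ℝ) : t < √(1 + t ^ 2) := by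
  rcases le_or_gt t 0 with ht | ht
  · exact ht.trans_lt (sqrt_pos.2 (by positivity))
  · exact (lt_sqrt ht.le).2 (by linarith)

lemma sqrt_one_add_sq_le (t : ℝ) : √(1 + t ^ 2) ≤ 1 + |t| :=
  sqrt_le_iff.2 ⟨by positivity, by nlinarith [sq_abs t, abs_nonneg t]⟩

lemma tendsto_sqrt_one_add_sq_sub_atTop :
    Tendsto (fun t => √(1 + t ^ 2) - t) atTop (𝓝 0) := by
  have hsum : Tendsto (fun t => √(1 + t ^ 2) + t) atTop atTop :=
    tendsto_atTop_mono (fun t => le_add_of_nonneg_left (sqrt_nonneg _)) tendsto_id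
  -- `√(1 + t²) - t = (√(1 + t²) + t)⁻¹`
  refine (tendsto_inv_atTop_zero.comp hsum).congr fun t => ?_
  refine inv_eq_of_mul_eq_one_right ?_
  linear_combination sq_sqrt (by positivity : (0 : ℝ) ≤ 1 + t ^ 2)

end Real

lemma integral_pos_of_forall_pos {α : Type*} [MeasurableSpace α] {μ : Measure α} [NeZero μ]
    {f : α → ℝ} (hf : Integrable f μ) (hpos : ∀ x, 0 < f x) : 0 < ∫ x, f x ∂μ := by
  rw [integral_pos_iff_support_of_nonneg (fun x => (hpos x).le) hf,
    Function.support_eq_univ fun x => (hpos x).ne']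
  simp [NeZero.ne μ]

lemma hasWeakDeriv1_of_contDiff {u : ℝ → ℝ} (hu : ContDiff ℝ 1 u) :
    HasWeakDeriv1 u (deriv u) := by
  have hIoo (g : ℝ → ℝ) : ∫ x in Ioo (-1 : ℝ) 1, g x = ∫ x in (-1 : ℝ)..1, g x := by
    rw [intervalIntegral.integral_of_le (by norm_num), integral_Ioc_eq_integral_Ioo]
  refine ⟨hu.continuous.integrableOn_Icc.mono_set Ioo_subset_Icc_self,
    (hu.continuous_deriv le_rfl).integrableOn_Icc.mono_set Ioo_subset_Icc_self, ?_⟩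
  intro φ hφ _ hsupp
  have hφ_end : ∀ x, x ∉ Ioo (-1 : ℝ) 1 → φ x = 0 := fun x hx =>
    image_eq_zero_of_notMem_tsupport fun h => hx (hsupp h)
  rw [hIoo, hIoo, intervalIntegral.integral_mul_deriv_eq_deriv_mul
      (fun x _ => (hu.differentiable one_ne_zero x).hasDerivAt)
      (fun x _ => (hφ.differentiable one_ne_zero x).hasDerivAt)
      ((hu.continuous_deriv le_rfl).intervalIntegrable _ _)
      ((hφ.continuous_deriv le_rfl).intervalIntegrable _ _),
    hφ_end 1 (by simp), hφ_end (-1) (by simp)]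
  ring

lemma neg_measureReal_univ_lt_integral_sqrt_one_add_sq_sub_one_sub {α : Type*}
    [MeasurableSpace α] {μ : Measure α} [IsFiniteMeasure μ] [NeZero μ] {g : α → ℝ}
    (hg : Integrable g μ) :
    -μ.real univ < ∫ x, (√(1 + g x ^ 2) - 1 - g x) ∂μ := by
  have hsqrt : Integrable (fun x => √(1 + g x ^ 2)) μ := by
    refine Integrable.mono' ((integrable_const 1).add hg.abs) ?_ (ae_of_all _ fun x => ?_)
    · exact (by fun_prop : Continuous fun t : ℝ => √(1 + t ^ 2)).comp_aestronglyMeasurable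
        hg.aestronglyMeasurable
    · rw [Real.norm_of_nonneg (Real.sqrt_nonneg _)]
      exact Real.sqrt_one_add_sq_le (g x)
  have hpos : 0 < ∫ x, (√(1 + g x ^ 2) - g x) ∂μ :=
    integral_pos_of_forall_pos (hsqrt.sub hg) fun x => sub_pos.2 (Real.lt_sqrt_one_add_sq _)
  have hsplit : ∫ x, (√(1 + g x ^ 2) - 1 - g x) ∂μ =
      ∫ x, (√(1 + g x ^ 2) - g x) ∂μ - μ.real univ := by
    simp_rw [sub_right_comm _ (1 : ℝ)]
    rw [integral_sub (f := fun x => √(1 + g x ^ 2) - g x) (hsqrt.sub hg) (integrable_const 1),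
      integral_const, smul_eq_mul, mul_one]
  linarith

lemma exFunctional_gt {u' : ℝ → ℝ} (hu' : IntegrableOn u' (Ioo (-1 : ℝ) 1)) :
    -2 < exFunctional u' := by
  have : NeZero (volume.restrict (Ioo (-1 : ℝ) 1)) := ⟨by simp⟩
  have h := neg_measureReal_univ_lt_integral_sqrt_one_add_sq_sub_one_sub hu'
  rwa [Measure.real, Measure.restrict_apply_univ, Real.volume_Ioo,
    ENNReal.toReal_ofReal (by norm_num), show (1 : ℝ) - -1 = 2 by norm_num] at h

lemma exFunctional_const (c : ℝ) :
    exFunctional (fun _ => c) = 2 * (√(1 + c ^ 2) - 1 - c) := by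
  rw [exFunctional, setIntegral_const, smul_eq_mul, Measure.real, Real.volume_Ioo]
  norm_num

lemma tendsto_exFunctional_const_atTop :
    Tendsto (fun c => exFunctional (fun _ => c)) atTop (𝓝 (-2)) := by
  simp_rw [exFunctional_const, sub_right_comm _ (1 : ℝ)]
  simpa using (Real.tendsto_sqrt_one_add_sq_sub_atTop.sub_const 1).const_mul 2

/-- **Example 1.4 (non-existence of minimisers).** For `f(t) = √(1+t²) − 1`, `T₀ ≡ 1`
and `Ω = (−1,1)`, the infimum of `𝔉` over `W^{1,1}((−1,1))` equals `−2`, and it is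
not attained. -/
theorem example_infimum_not_attained :
    IsGLB {r : ℝ | ∃ u u' : ℝ → ℝ, HasWeakDeriv1 u u' ∧ r = exFunctional u'} (-2) ∧
    ¬ ∃ u u' : ℝ → ℝ, HasWeakDeriv1 u u' ∧ exFunctional u' = -2 := by
  refine ⟨isGLB_of_mem_closure ?_ ?_, ?_⟩
  · rintro _ ⟨u, u', hu, rfl⟩
    exact (exFunctional_gt hu.2.1).le
  · refine mem_closure_of_tendsto tendsto_exFunctional_const_atTop
      (Eventually.of_forall fun c => ?_)
    refine ⟨(c * ·), _, hasWeakDeriv1_of_contDiff (by fun_prop), ?_⟩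
    simp
  · rintro ⟨u, u', hu, hmin⟩
    exact (exFunctional_gt hu.2.1).ne' hmin

end
end

section
/- Let Ω ⊂ ℝⁿ be a bounded Lipschitz domain, let F ∈ C¹(ℝ^{N×n}) be convex with ν|z| − L ≤ F(z) ≤ L(1+|z|) for all z, and let T₀ ∈ L^∞(Ω;ℝ^{N×n}). If u ∈ W^{1,1}(Ω;ℝ^N) minimises 𝓕[w] = ∫_Ω (F(∇w) − T₀·∇w) dx among all w ∈ W^{1,1}(Ω;ℝ^N), then σ := D_z F(∇u) − T₀ belongs to L^∞_⊥(Ω;ℝ^{N×n}) and is the unique maximiser of the dual functional ℛ_{T₀}[χ] = −∫_Ω F*(T₀ + χ) dx over L^∞_⊥(Ω;ℝ^{N×n}). -/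
open MeasureTheory Filter Topology Set
open scoped ENNReal RealInnerProductSpace

noncomputable section

/-- Euclidean space `ℝⁿ`. -/
abbrev EVec (n : ℕ) := EuclideanSpace ℝ (Fin n)

/-- Frobenius inner product of two "matrices". -/
def mdot {ι κ : Type*} [Fintype ι] [Fintype κ] (A B : ι → κ → ℝ) : ℝ :=
  ∑ a, ∑ i, A a i * B a i

/-- Frobenius norm. -/
noncomputable def mnorm {ι κ : Type*} [Fintype ι] [Fintype κ] (A : ι → κ → ℝ) : ℝ :=
  Real.sqrt (mdot A A)

/-- Euclidean norm of a vector given as a tuple. -/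
noncomputable def vnorm {ι : Type*} [Fintype ι] (v : ι → ℝ) : ℝ :=
  Real.sqrt (∑ a, v a ^ 2)

/-- `Ω ⊆ ℝⁿ` is a (nonempty, open, connected) Lipschitz domain: every boundary point has
a neighbourhood on which `Ω` can be flattened to a half space by a bi-Lipschitz map. -/
def IsLipschitzDomain {n : ℕ} (Ω : Set (EVec n)) : Prop :=
  IsOpen Ω ∧ Ω.Nonempty ∧ IsConnected Ω ∧
  ∀ x ∈ frontier Ω, ∃ (U : Set (EVec n)) (h hinv : EVec n → EVec n) (K : NNReal)
      (e : EVec n),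
    ‖e‖ = 1 ∧ IsOpen U ∧ x ∈ U ∧ LipschitzOnWith K h U ∧
    LipschitzOnWith K hinv (h '' U) ∧ (∀ y ∈ U, hinv (h y) = y) ∧
    h '' (U ∩ Ω) = (h '' U) ∩ {y : EVec n | 0 < ⟪e, y⟫}

/-- `Du` is the weak (distributional) gradient of `u` on `Ω`, and both are integrable;
i.e. `u ∈ W^{1,1}(Ω; ℝ^ι)` with weak gradient `Du`. -/
def HasWeakDerivOn {n : ℕ} {ι : Type*} [Fintype ι] (Ω : Set (EVec n))
    (u : EVec n → ι → ℝ) (Du : EVec n → ι → Fin n → ℝ) : Prop :=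
  IntegrableOn u Ω volume ∧ IntegrableOn Du Ω volume ∧
  ∀ φ : EVec n → ℝ, ContDiff ℝ 1 φ → HasCompactSupport φ → tsupport φ ⊆ Ω →
    ∀ (a : ι) (i : Fin n),
      ∫ x in Ω, u x a * fderiv ℝ φ x (EuclideanSpace.single i 1) =
        - ∫ x in Ω, Du x a i * φ x

/-- `u ∈ W^{1,2}(Ω;ℝ^ι)` with weak gradient `Du`. -/
def MemW12 {n : ℕ} {ι : Type*} [Fintype ι] (Ω : Set (EVec n))
    (u : EVec n → ι → ℝ) (Du : EVec n → ι → Fin n → ℝ) : Prop :=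
  HasWeakDerivOn Ω u Du ∧ IntegrableOn (fun x => vnorm (u x) ^ 2) Ω volume ∧
    IntegrableOn (fun x => mnorm (Du x) ^ 2) Ω volume

/-- vanishing mean value `(u)_Ω = 0`. -/
def ZeroMean {n : ℕ} {ι : Type*} [Fintype ι] (Ω : Set (EVec n))
    (u : EVec n → ι → ℝ) : Prop :=
  ∀ a : ι, ∫ x in Ω, u x a = 0

/-- The `L^∞(Ω)` norm of a matrix field (w.r.t. the pointwise Frobenius norm). -/
noncomputable def linfNormOn {n N : ℕ} (Ω : Set (EVec n))
    (T : EVec n → Fin N → Fin n → ℝ) : ℝ≥0∞ :=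
  essSup (fun x => ENNReal.ofReal (mnorm (T x))) (volume.restrict Ω)

/-- `T ∈ W^{1,∞}(Ω)`: bounded and Lipschitz on `Ω`. -/
def MemW1inf {n N : ℕ} (Ω : Set (EVec n)) (T : EVec n → Fin N → Fin n → ℝ) : Prop :=
  ∃ C : NNReal, (∀ x ∈ Ω, ‖T x‖ ≤ C) ∧ LipschitzOnWith C T Ω

/-- `T ∈ W^{2,∞}(Ω)`: `T` is bounded with bounded Lipschitz derivative on `Ω`. -/
def MemW2inf {n N : ℕ} (Ω : Set (EVec n)) (T : EVec n → Fin N → Fin n → ℝ) : Prop :=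
  ∃ (C : NNReal) (DT : EVec n → EVec n →L[ℝ] (Fin N → Fin n → ℝ)),
    (∀ x ∈ Ω, ‖T x‖ ≤ C) ∧ (∀ x ∈ Ω, HasFDerivWithinAt T (DT x) Ω x) ∧
    (∀ x ∈ Ω, ‖DT x‖ ≤ C) ∧ LipschitzOnWith C DT Ω

/-- The nonlinear map `A(z) = f'(|z|) z / |z|` (equal to `0` at `z = 0`). -/
noncomputable def Amap {N n : ℕ} (f' : ℝ → ℝ) (z : Fin N → Fin n → ℝ) :
    Fin N → Fin n → ℝ :=
  fun a i => (f' (mnorm z) / mnorm z) * z a i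

/-- `u` is a weak solution of the Neumann problem for the integrand `f(|·|)` and datum `T₀`. -/
def IsWeakSolution {n N : ℕ} (Ω : Set (EVec n)) (f' : ℝ → ℝ)
    (T₀ : EVec n → Fin N → Fin n → ℝ)
    (u : EVec n → Fin N → ℝ) (Du : EVec n → Fin N → Fin n → ℝ) : Prop :=
  HasWeakDerivOn Ω u Du ∧
  ∀ φ Dφ, HasWeakDerivOn Ω φ Dφ →
    ∫ x in Ω, mdot (Amap f' (Du x)) (Dφ x) = ∫ x in Ω, mdot (T₀ x) (Dφ x)

/-- The functional `𝔉[w] = ∫_Ω (f(|∇w|) − T₀ · ∇w) dx` (as a function of the gradient). -/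
noncomputable def FF {n N : ℕ} (Ω : Set (EVec n)) (f : ℝ → ℝ)
    (T₀ : EVec n → Fin N → Fin n → ℝ) (Du : EVec n → Fin N → Fin n → ℝ) : ℝ :=
  ∫ x in Ω, (f (mnorm (Du x)) - mdot (T₀ x) (Du x))

/-- The regularised functional `𝔉_k[w] = 𝔉[w] + (2k)⁻¹ ∫_Ω |∇w|² dx`. -/
noncomputable def FFk {n N : ℕ} (Ω : Set (EVec n)) (f : ℝ → ℝ)
    (T₀ : EVec n → Fin N → Fin n → ℝ) (k : ℕ)
    (Du : EVec n → Fin N → Fin n → ℝ) : ℝ :=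
  FF Ω f T₀ Du + (2 * (k : ℝ))⁻¹ * ∫ x in Ω, mnorm (Du x) ^ 2

end

/-- The functional `𝓕[w] = ∫_Ω (F(∇w) − T₀·∇w) dx` for a general integrand `F`. -/
noncomputable def FFgen {n N : ℕ} (Ω : Set (EVec n)) (F : (Fin N → Fin n → ℝ) → ℝ)
    (T₀ : EVec n → Fin N → Fin n → ℝ) (Du : EVec n → Fin N → Fin n → ℝ) : ℝ :=
  ∫ x in Ω, (F (Du x) - mdot (T₀ x) (Du x))

/-- The elementary matrix with a `1` in position `(a,i)`. -/
def basisMat {N n : ℕ} (a : Fin N) (i : Fin n) : Fin N → Fin n → ℝ :=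
  fun a' i' => if a' = a ∧ i' = i then 1 else 0

/-- The gradient `D_z F(z)` of `F : ℝ^{N×n} → ℝ`, as a matrix. -/
noncomputable def DFmat {N n : ℕ} (F : (Fin N → Fin n → ℝ) → ℝ)
    (z : Fin N → Fin n → ℝ) : Fin N → Fin n → ℝ :=
  fun a i => fderiv ℝ F z (basisMat a i)

/-- `χ ∈ L^∞_⊥(Ω;ℝ^{N×n})`: a bounded measurable matrix field which annihilates all
`W^{1,1}`-gradients. -/
def MemLinfPerp {n N : ℕ} (Ω : Set (EVec n)) (χ : EVec n → Fin N → Fin n → ℝ) : Prop :=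
  AEStronglyMeasurable χ (volume.restrict Ω) ∧ (∃ C : ℝ, ∀ x ∈ Ω, mnorm (χ x) ≤ C) ∧
  ∀ (w : EVec n → Fin N → ℝ) (Dw : EVec n → Fin N → Fin n → ℝ),
    HasWeakDerivOn Ω w Dw → ∫ x in Ω, mdot (χ x) (Dw x) = 0

/-- The shifted convex conjugate `F*(z*) + F(0) = sup_w (z*·w − F(w) + F(0)) ∈ [0,∞]`,
valued in `ℝ≥0∞` so that infeasible points (`F*(z*) = ∞`) are handled correctly. -/
noncomputable def FstarShift {N n : ℕ} (F : (Fin N → Fin n → ℝ) → ℝ)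
    (z : Fin N → Fin n → ℝ) : ℝ≥0∞ :=
  ⨆ w : Fin N → Fin n → ℝ, ENNReal.ofReal (mdot z w - F w + F 0)

/-- The dual functional `ℛ_{T₀}[χ] = −∫_Ω F*(T₀+χ) dx`, valued in `EReal` (it equals
`F(0)·|Ω| − ∫_Ω (F*(T₀+χ) + F(0)) dx`, where the last integrand is nonnegative and the
value is `−∞` if `F*(T₀+χ)` is not integrable). -/
noncomputable def Rdual {n N : ℕ} (Ω : Set (EVec n)) (F : (Fin N → Fin n → ℝ) → ℝ)
    (T₀ χ : EVec n → Fin N → Fin n → ℝ) : EReal :=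
  ((F 0 * (volume Ω).toReal : ℝ) : EReal) -
    ((∫⁻ x in Ω, FstarShift F (T₀ x + χ x) : ℝ≥0∞) : EReal)

/-!
Weak duality: for `χ ∈ L^∞_⊥` and any competitor `w`, the Fenchel–Young inequality
`F*(T₀ + χ) ≥ (T₀ + χ)·∇w − F(∇w)` holds pointwise; integrating it, the term `χ·∇w` drops out
and `ℛ[χ] ≤ 𝓕[w]`. Convexity and the linear growth bound make `F` globally `L`-Lipschitz, so
`|D_zF| ≤ L` and `σ = D_zF(∇u) − T₀` is bounded; differentiating `t ↦ 𝓕[u + t w]` under the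
integral at its minimum `t = 0` gives the Euler–Lagrange equation `∫ σ·∇w = 0`, i.e.
`σ ∈ L^∞_⊥`. At `T₀ + σ = D_zF(∇u)` Fenchel–Young is an equality, so `ℛ[σ] = 𝓕[u]` and `σ` is
a maximiser. If also `ℛ[χ] = 𝓕[u]`, Fenchel–Young must be sharp at `∇u` almost everywhere:
then `T₀ + χ` is a subgradient of the differentiable `F` at `∇u`, hence equals `D_zF(∇u)`.
-/

section Frobenius

variable {ι κ : Type*} [Fintype ι] [Fintype κ]

noncomputable def toFrobenius : (ι → κ → ℝ) →L[ℝ] EuclideanSpace ℝ (ι × κ) :=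
  LinearMap.toContinuousLinearMap
    { toFun := fun A => WithLp.toLp 2 fun p => A p.1 p.2
      map_add' := fun _ _ => rfl
      map_smul' := fun _ _ => rfl }

theorem toFrobenius_apply (A : ι → κ → ℝ) :
    toFrobenius A = WithLp.toLp 2 fun p => A p.1 p.2 :=
  rfl

theorem mdot_eq_inner (A B : ι → κ → ℝ) : mdot A B = ⟪toFrobenius A, toFrobenius B⟫ := by
  simp [mdot, toFrobenius_apply, PiLp.inner_apply, Fintype.sum_prod_type, mul_comm]

theorem mnorm_eq_norm (A : ι → κ → ℝ) : mnorm A = ‖toFrobenius A‖ := by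
  rw [mnorm, mdot_eq_inner, real_inner_self_eq_norm_sq, Real.sqrt_sq (norm_nonneg _)]

theorem mnorm_nonneg (A : ι → κ → ℝ) : 0 ≤ mnorm A := by
  rw [mnorm_eq_norm]; positivity

theorem mdot_self (A : ι → κ → ℝ) : mdot A A = mnorm A ^ 2 := by
  rw [mdot_eq_inner, mnorm_eq_norm, real_inner_self_eq_norm_sq]

theorem abs_mdot_le (A B : ι → κ → ℝ) : |mdot A B| ≤ mnorm A * mnorm B := by
  rw [mdot_eq_inner, mnorm_eq_norm, mnorm_eq_norm]; exact abs_real_inner_le_norm _ _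

theorem mnorm_sub_le (A B : ι → κ → ℝ) : mnorm (A - B) ≤ mnorm A + mnorm B := by
  simp only [mnorm_eq_norm, map_sub]; exact norm_sub_le _ _

theorem mdot_add_left (A B C : ι → κ → ℝ) : mdot (A + B) C = mdot A C + mdot B C := by
  simp only [mdot_eq_inner, map_add, inner_add_left]

theorem mdot_sub_left (A B C : ι → κ → ℝ) : mdot (A - B) C = mdot A C - mdot B C := by
  simp only [mdot_eq_inner, map_sub, inner_sub_left]

theorem mdot_sub_right (A B C : ι → κ → ℝ) : mdot A (B - C) = mdot A B - mdot A C := by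
  simp only [mdot_eq_inner, map_sub, inner_sub_right]

theorem mdot_neg_right (A B : ι → κ → ℝ) : mdot A (-B) = -mdot A B := by
  simp only [mdot_eq_inner, map_neg, inner_neg_right]

noncomputable def frobeniusSeminorm : Seminorm ℝ (ι → κ → ℝ) :=
  (normSeminorm ℝ (EuclideanSpace ℝ (ι × κ))).comp toFrobenius.toLinearMap

theorem frobeniusSeminorm_apply (A : ι → κ → ℝ) : frobeniusSeminorm A = mnorm A :=
  (mnorm_eq_norm A).symm

noncomputable def mdotL (A : ι → κ → ℝ) : (ι → κ → ℝ) →L[ℝ] ℝ :=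
  (innerSL ℝ (toFrobenius A)).comp toFrobenius

theorem mdotL_apply (A B : ι → κ → ℝ) : mdotL A B = mdot A B :=
  (mdot_eq_inner A B).symm

theorem Continuous.mdot {α : Type*} [TopologicalSpace α] {f g : α → ι → κ → ℝ}
    (hf : Continuous f) (hg : Continuous g) : Continuous fun x => mdot (f x) (g x) := by
  simp only [mdot_eq_inner]
  exact (toFrobenius.continuous.comp hf).inner (toFrobenius.continuous.comp hg)

theorem MeasureTheory.AEStronglyMeasurable.mdot {α : Type*} [MeasurableSpace α]
    {μ : Measure α} {f g : α → ι → κ → ℝ} (hf : AEStronglyMeasurable f μ)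
    (hg : AEStronglyMeasurable g μ) : AEStronglyMeasurable (fun x => mdot (f x) (g x)) μ := by
  simp only [mdot_eq_inner]
  exact (toFrobenius.continuous.comp_aestronglyMeasurable hf).inner
    (toFrobenius.continuous.comp_aestronglyMeasurable hg)

theorem integrable_mnorm {α : Type*} [MeasurableSpace α] {μ : Measure α}
    {f : α → ι → κ → ℝ} (hf : Integrable f μ) : Integrable (fun x => mnorm (f x)) μ := by
  simpa only [mnorm_eq_norm] using (toFrobenius.integrable_comp hf).norm

theorem MeasureTheory.Integrable.mdot_of_bound {α : Type*} [MeasurableSpace α]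
    {μ : Measure α} {f g : α → ι → κ → ℝ} {C : ℝ} (hf : AEStronglyMeasurable f μ)
    (hfC : ∀ᵐ x ∂μ, mnorm (f x) ≤ C) (hg : Integrable g μ) :
    Integrable (fun x => mdot (f x) (g x)) μ := by
  refine ((integrable_mnorm hg).const_mul C).mono' (hf.mdot hg.1) ?_
  filter_upwards [hfC] with x hx
  exact (abs_mdot_le _ _).trans (mul_le_mul_of_nonneg_right hx (mnorm_nonneg _))

theorem integrableOn_mdot_of_forall_mem_le {α : Type*} [MeasurableSpace α] {μ : Measure α}
    {s : Set α} (hs : MeasurableSet s) {f g : α → ι → κ → ℝ}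
    (hf : AEStronglyMeasurable f (μ.restrict s)) (hfC : ∃ C, ∀ x ∈ s, mnorm (f x) ≤ C)
    (hg : IntegrableOn g s μ) : IntegrableOn (fun x => mdot (f x) (g x)) s μ :=
  let ⟨_, hC⟩ := hfC
  Integrable.mdot_of_bound hf (ae_restrict_of_forall_mem hs hC) hg

theorem integrable_comp_of_abs_sub_le {α : Type*} [MeasurableSpace α] {μ : Measure α}
    [IsFiniteMeasure μ] {F : (ι → κ → ℝ) → ℝ} (hF : Continuous F) {L : ℝ}
    (hFL : ∀ z, |F z - F 0| ≤ L * mnorm z) {f : α → ι → κ → ℝ} (hf : Integrable f μ) :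
    Integrable (fun x => F (f x)) μ := by
  refine ((integrable_const |F 0|).add ((integrable_mnorm hf).const_mul L)).mono'
    (hF.comp_aestronglyMeasurable hf.1) (Eventually.of_forall fun x => ?_)
  show |F (f x)| ≤ |F 0| + L * mnorm (f x)
  linarith [hFL (f x), abs_sub_abs_le_abs_sub (F (f x)) (F 0)]

end Frobenius

section ConvexGradient

variable {E : Type*} [NormedAddCommGroup E] [NormedSpace ℝ E] {f : E → ℝ}

theorem ConvexOn.add_fderiv_sub_le (hf : ConvexOn ℝ univ f) {x : E}
    (hd : DifferentiableAt ℝ f x) (y : E) : f x + fderiv ℝ f x (y - x) ≤ f y := by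
  have hline : ConvexOn ℝ univ (f ∘ AffineMap.lineMap (k := ℝ) x y) := hf.comp_affineMap _
  have hder : HasDerivAt (f ∘ AffineMap.lineMap (k := ℝ) x y) (fderiv ℝ f x (y - x)) 0 := by
    have hd0 : DifferentiableAt ℝ f (AffineMap.lineMap x y (0 : ℝ)) := by simpa using hd
    simpa using hd0.hasFDerivAt.comp_hasDerivAt 0 AffineMap.hasDerivAt_lineMap
  have := hline.le_slope_of_hasDerivAt (mem_univ 0) (mem_univ 1) zero_lt_one hder
  simp only [slope_def_field, Function.comp_apply, AffineMap.lineMap_apply_zero,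
    AffineMap.lineMap_apply_one, sub_zero, div_one] at this
  linarith

theorem ConvexOn.le_add_mul_seminorm (hf : ConvexOn ℝ univ f) (p : Seminorm ℝ E) {L : ℝ}
    (hL : 0 ≤ L) (hgrowth : ∀ z, f z ≤ L * (1 + p z)) (x h : E) :
    f (x + h) ≤ f x + L * p h := by
  -- `x + h = (1 - t) • x + t • (x + t⁻¹ • h)`; let `t → 0⁺`.
  have key : ∀ t ∈ Ioc (0 : ℝ) 1, f (x + h) ≤ f x + L * p h + t * (L * (1 + p x) - f x) := by
    rintro t ⟨ht0, ht1⟩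
    have hxh : (1 - t) • x + t • (x + t⁻¹ • h) = x + h := by
      rw [smul_add, smul_smul, mul_inv_cancel₀ ht0.ne', one_smul, sub_smul, one_smul]
      abel
    have hconv := hf.2 (mem_univ x) (mem_univ (x + t⁻¹ • h)) (sub_nonneg.2 ht1) ht0.le
      (by ring)
    rw [hxh, smul_eq_mul, smul_eq_mul] at hconv
    have hp : p (x + t⁻¹ • h) ≤ p x + t⁻¹ * p h := by
      refine (map_add_le_add p _ _).trans_eq ?_
      rw [map_smul_eq_mul, Real.norm_of_nonneg (inv_nonneg.2 ht0.le)]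
    calc f (x + h) ≤ (1 - t) * f x + t * f (x + t⁻¹ • h) := hconv
      _ ≤ (1 - t) * f x + t * (L * (1 + (p x + t⁻¹ * p h))) := by
          gcongr; exact (hgrowth _).trans (by gcongr)
      _ = f x + L * p h + t * (L * (1 + p x) - f x) := by field_simp; ring
  have hlim : Tendsto (fun t : ℝ => f x + L * p h + t * (L * (1 + p x) - f x)) (𝓝[>] 0)
      (𝓝 (f x + L * p h)) := by
    refine tendsto_nhdsWithin_of_tendsto_nhds ?_
    simpa using ((continuous_id.mul continuous_const).const_add (f x + L * p h)).tendsto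
      (0 : ℝ) (f := fun t : ℝ => f x + L * p h + t * (L * (1 + p x) - f x))
  exact ge_of_tendsto hlim (eventually_of_mem (Ioc_mem_nhdsGT zero_lt_one) key)

theorem ConvexOn.fderiv_le_mul_seminorm (hf : ConvexOn ℝ univ f) (p : Seminorm ℝ E) {L : ℝ}
    (hL : 0 ≤ L) (hgrowth : ∀ z, f z ≤ L * (1 + p z)) {x : E} (hd : DifferentiableAt ℝ f x)
    (h : E) : fderiv ℝ f x h ≤ L * p h := by
  have hgrad := hf.add_fderiv_sub_le hd (x + h)
  rw [add_sub_cancel_left] at hgrad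
  linarith [hf.le_add_mul_seminorm p hL hgrowth x h]

theorem ConvexOn.abs_sub_le_mul_seminorm (hf : ConvexOn ℝ univ f) (p : Seminorm ℝ E) {L : ℝ}
    (hL : 0 ≤ L) (hgrowth : ∀ z, f z ≤ L * (1 + p z)) (x y : E) :
    |f y - f x| ≤ L * p (y - x) := by
  have hxy := hf.le_add_mul_seminorm p hL hgrowth x (y - x)
  have hyx := hf.le_add_mul_seminorm p hL hgrowth y (x - y)
  rw [add_sub_cancel] at hxy hyx
  rw [map_sub_rev] at hyx
  exact abs_sub_le_iff.2 ⟨by linarith, by linarith⟩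

theorem eq_fderiv_of_forall_add_le {x : E} (hd : DifferentiableAt ℝ f x) {φ : E →L[ℝ] ℝ}
    (h : ∀ y, f x + φ (y - x) ≤ f y) : φ = fderiv ℝ f x := by
  have hmin : IsLocalMin (fun y => f y - φ y) x := Eventually.of_forall fun y => by
    have := h y
    rw [map_sub] at this
    linarith
  have := hmin.fderiv_eq_zero
  rw [fderiv_fun_sub hd φ.differentiableAt, φ.fderiv, sub_eq_zero] at this
  exact this.symm

end ConvexGradient

section MatrixGradient

variable {N n : ℕ} {F : (Fin N → Fin n → ℝ) → ℝ}

theorem mdot_basisMat (A : Fin N → Fin n → ℝ) (a : Fin N) (i : Fin n) :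
    mdot A (basisMat a i) = A a i := by
  simp [mdot, basisMat, ite_and]

theorem sum_smul_basisMat (w : Fin N → Fin n → ℝ) :
    ∑ a, ∑ i, w a i • basisMat a i = w := by
  ext a i
  simp [Finset.sum_apply, basisMat, ite_and]

theorem fderiv_apply_eq_mdot (z w : Fin N → Fin n → ℝ) :
    fderiv ℝ F z w = mdot (DFmat F z) w := by
  conv_lhs => rw [← sum_smul_basisMat w]
  simp only [map_sum, map_smul, smul_eq_mul, mdot, DFmat, mul_comm]

theorem ConvexOn.add_mdot_DFmat_le (hF : ConvexOn ℝ univ F) {z : Fin N → Fin n → ℝ}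
    (hd : DifferentiableAt ℝ F z) (w : Fin N → Fin n → ℝ) :
    F z + mdot (DFmat F z) (w - z) ≤ F w := by
  simpa only [fderiv_apply_eq_mdot] using hF.add_fderiv_sub_le hd w

theorem ConvexOn.mnorm_DFmat_le (hF : ConvexOn ℝ univ F) {L : ℝ} (hL : 0 ≤ L)
    (hgrowth : ∀ z, F z ≤ L * (1 + mnorm z)) {z : Fin N → Fin n → ℝ}
    (hd : DifferentiableAt ℝ F z) : mnorm (DFmat F z) ≤ L := by
  have h := hF.fderiv_le_mul_seminorm frobeniusSeminorm hL
    (by simpa only [frobeniusSeminorm_apply] using hgrowth) hd (DFmat F z)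
  rw [fderiv_apply_eq_mdot, mdot_self, frobeniusSeminorm_apply, sq] at h
  rcases (mnorm_nonneg (DFmat F z)).eq_or_lt with h0 | h0
  · exact h0 ▸ hL
  · exact le_of_mul_le_mul_right h h0

theorem ConvexOn.abs_sub_le_mul_mnorm (hF : ConvexOn ℝ univ F) {L : ℝ} (hL : 0 ≤ L)
    (hgrowth : ∀ z, F z ≤ L * (1 + mnorm z)) (x y : Fin N → Fin n → ℝ) :
    |F y - F x| ≤ L * mnorm (y - x) := by
  simpa only [frobeniusSeminorm_apply] using hF.abs_sub_le_mul_seminorm frobeniusSeminorm hL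
    (by simpa only [frobeniusSeminorm_apply] using hgrowth) x y

theorem eq_DFmat_of_forall_add_mdot_le {z p : Fin N → Fin n → ℝ}
    (hd : DifferentiableAt ℝ F z) (h : ∀ w, F z + mdot p (w - z) ≤ F w) : p = DFmat F z := by
  have hφ := eq_fderiv_of_forall_add_le hd (φ := mdotL p) (by simpa only [mdotL_apply] using h)
  ext a i
  rw [DFmat, ← hφ, mdotL_apply, mdot_basisMat]

theorem continuous_DFmat (hF : ContDiff ℝ 1 F) : Continuous (DFmat F) :=
  continuous_pi fun _ => continuous_pi fun _ =>
    (hF.continuous_fderiv one_ne_zero).clm_apply continuous_const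

theorem hasDerivAt_sub_mdot_line (hF : Differentiable ℝ F) (A z v : Fin N → Fin n → ℝ) (t : ℝ) :
    HasDerivAt (fun s : ℝ => F (z + s • v) - mdot A (z + s • v))
      (mdot (DFmat F (z + t • v) - A) v) t := by
  have hline : HasDerivAt (fun s : ℝ => z + s • v) v t := by
    simpa using ((hasDerivAt_id t).smul_const v).const_add z
  have hF' := (hF (z + t • v)).hasFDerivAt.comp_hasDerivAt t hline
  have hA := (mdotL A).hasFDerivAt.comp_hasDerivAt t hline
  simp only [Function.comp_def, mdotL_apply, fderiv_apply_eq_mdot] at hF' hA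
  rw [mdot_sub_left]
  exact hF'.sub hA

end MatrixGradient

section Conjugate

variable {N n : ℕ} {F : (Fin N → Fin n → ℝ) → ℝ}

def youngBound (F : (Fin N → Fin n → ℝ) → ℝ) (zs w : Fin N → Fin n → ℝ) : ℝ :=
  mdot zs w - F w + F 0

theorem ofReal_youngBound_le_FstarShift (zs w : Fin N → Fin n → ℝ) :
    ENNReal.ofReal (youngBound F zs w) ≤ FstarShift F zs :=
  le_iSup (fun w => ENNReal.ofReal (mdot zs w - F w + F 0)) w

theorem measurable_FstarShift : Measurable (FstarShift F) := by
  refine LowerSemicontinuous.measurable (lowerSemicontinuous_iSup fun w => ?_)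
  exact (ENNReal.continuous_ofReal.comp (((continuous_id.mdot continuous_const).sub
    continuous_const).add continuous_const)).lowerSemicontinuous

theorem ConvexOn.youngBound_DFmat_nonneg (hF : ConvexOn ℝ univ F) {z : Fin N → Fin n → ℝ}
    (hd : DifferentiableAt ℝ F z) : 0 ≤ youngBound F (DFmat F z) z := by
  have h := hF.add_mdot_DFmat_le hd 0
  rw [zero_sub, mdot_neg_right] at h
  rw [youngBound]
  linarith

theorem ConvexOn.FstarShift_DFmat (hF : ConvexOn ℝ univ F) {z : Fin N → Fin n → ℝ}
    (hd : DifferentiableAt ℝ F z) :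
    FstarShift F (DFmat F z) = ENNReal.ofReal (youngBound F (DFmat F z) z) := by
  refine le_antisymm (iSup_le fun w => ENNReal.ofReal_le_ofReal ?_)
    (ofReal_youngBound_le_FstarShift _ _)
  have h := hF.add_mdot_DFmat_le hd w
  rw [mdot_sub_right] at h
  rw [youngBound]
  linarith

theorem eq_DFmat_of_FstarShift_le {zs z : Fin N → Fin n → ℝ} (hd : DifferentiableAt ℝ F z)
    (h0 : 0 ≤ youngBound F zs z) (h : FstarShift F zs ≤ ENNReal.ofReal (youngBound F zs z)) :
    zs = DFmat F z := by
  refine eq_DFmat_of_forall_add_mdot_le hd fun w => ?_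
  have hw := (ENNReal.ofReal_le_ofReal_iff h0).1
    ((ofReal_youngBound_le_FstarShift zs w).trans h)
  rw [youngBound, youngBound] at hw
  rw [mdot_sub_right]
  linarith

end Conjugate

section Lebesgue

variable {α : Type*} [MeasurableSpace α] {μ : Measure α}

theorem integrableOn_mul_of_hasCompactSupport [TopologicalSpace α] [OpensMeasurableSpace α]
    {s : Set α} {f g : α → ℝ} (hf : IntegrableOn f s μ) (hg : Continuous g)
    (hgs : HasCompactSupport g) : IntegrableOn (fun x => f x * g x) s μ := by
  obtain ⟨C, hC⟩ := hg.bounded_above_of_compact_support hgs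
  exact Integrable.mul_bdd hf hg.aestronglyMeasurable (Eventually.of_forall hC)

theorem ofReal_integral_le_lintegral_ofReal (g : α → ℝ) :
    ENNReal.ofReal (∫ x, g x ∂μ) ≤ ∫⁻ x, ENNReal.ofReal (g x) ∂μ := by
  by_cases hg : Integrable g μ
  · rw [integral_eq_lintegral_pos_part_sub_lintegral_neg_part hg]
    exact ENNReal.ofReal_le_of_le_toReal (sub_le_self _ ENNReal.toReal_nonneg)
  · simp [integral_undef hg]

theorem ae_nonneg_of_lintegral_ofReal_le {g : α → ℝ} (hg : Integrable g μ)
    (h0 : 0 ≤ ∫ x, g x ∂μ) (h : ∫⁻ x, ENNReal.ofReal (g x) ∂μ ≤ ENNReal.ofReal (∫ x, g x ∂μ)) :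
    0 ≤ᵐ[μ] g := by
  -- `∫ g = ∫ g⁺ - ∫ g⁻`, and the hypothesis leaves no room for `∫ g⁻`.
  have hpos := ENNReal.toReal_le_of_le_ofReal h0 h
  rw [integral_eq_lintegral_pos_part_sub_lintegral_neg_part hg] at hpos
  have hneg : ∫⁻ x, ENNReal.ofReal (-g x) ∂μ = 0 :=
    (ENNReal.toReal_eq_zero_iff _).1 (le_antisymm (by linarith) ENNReal.toReal_nonneg)
      |>.resolve_right hg.neg.lintegral_lt_top.ne
  filter_upwards [(lintegral_eq_zero_iff' hg.1.aemeasurable.neg.ennreal_ofReal).1 hneg]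
    with x hx
  simpa using hx

theorem ae_eq_ofReal_of_lintegral_le {f : α → ℝ≥0∞} {g : α → ℝ} (hf : AEMeasurable f μ)
    (hg : Integrable g μ) (h0 : 0 ≤ ∫ x, g x ∂μ) (hgf : ∀ᵐ x ∂μ, ENNReal.ofReal (g x) ≤ f x)
    (hfg : ∫⁻ x, f x ∂μ ≤ ENNReal.ofReal (∫ x, g x ∂μ)) :
    ∀ᵐ x ∂μ, 0 ≤ g x ∧ f x = ENNReal.ofReal (g x) := by
  have hle := (lintegral_mono_ae hgf).trans hfg
  have hnonneg := ae_nonneg_of_lintegral_ofReal_le hg h0 hle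
  have heq := ae_eq_of_ae_le_of_lintegral_le hgf (hle.trans_lt ENNReal.ofReal_lt_top).ne hf
    (hfg.trans_eq (ofReal_integral_eq_lintegral_ofReal hg hnonneg))
  filter_upwards [hnonneg, heq] with x hx hx'
  exact ⟨hx, hx'.symm⟩

end Lebesgue

namespace EReal

theorem coe_sub_ofReal_sub_of_le {c f : ℝ} (h : f ≤ c) :
    (c : EReal) - (ENNReal.ofReal (c - f) : EReal) = f := by
  rw [coe_ennreal_ofReal, max_eq_left (_root_.sub_nonneg.2 h), ← coe_sub, sub_sub_cancel]

theorem coe_sub_ofReal_sub_le (c f : ℝ) : (c : EReal) - (ENNReal.ofReal (c - f) : EReal) ≤ f := by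
  rcases le_total f c with h | h
  · exact (coe_sub_ofReal_sub_of_le h).le
  · rw [ENNReal.ofReal_of_nonpos (_root_.sub_nonpos.2 h), coe_ennreal_zero, sub_zero]
    exact_mod_cast h

theorem le_and_eq_ofReal_of_coe_sub_eq {c f : ℝ} {X : ℝ≥0∞} (h : (c : EReal) - X = f) :
    f ≤ c ∧ X = ENNReal.ofReal (c - f) := by
  have hX : X ≠ ⊤ := by
    rintro rfl
    rw [coe_ennreal_top, sub_top] at h
    exact bot_ne_coe f h
  lift X to NNReal using hX
  rw [coe_nnreal_eq_coe_real, ← coe_sub, EReal.coe_eq_coe_iff] at h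
  rw [← h, sub_sub_cancel, ENNReal.ofReal_coe_nnreal]
  exact ⟨by linarith [X.coe_nonneg], rfl⟩

end EReal

section WeakDerivative

variable {n : ℕ} {ι : Type*} [Fintype ι] {Ω : Set (EVec n)}

theorem HasWeakDerivOn.add {u w : EVec n → ι → ℝ} {Du Dw : EVec n → ι → Fin n → ℝ}
    (hu : HasWeakDerivOn Ω u Du) (hw : HasWeakDerivOn Ω w Dw) :
    HasWeakDerivOn Ω (fun x => u x + w x) (fun x => Du x + Dw x) := by
  refine ⟨hu.1.add hw.1, hu.2.1.add hw.2.1, fun φ hφ hφs hφΩ a i => ?_⟩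
  have hdφ : Continuous fun x => fderiv ℝ φ x (EuclideanSpace.single i 1) :=
    (hφ.continuous_fderiv one_ne_zero).clm_apply continuous_const
  have hdφs := hφs.fderiv_apply (𝕜 := ℝ) (EuclideanSpace.single i 1)
  simp only [Pi.add_apply, add_mul]
  rw [integral_add (integrableOn_mul_of_hasCompactSupport (hu.1.eval a) hdφ hdφs)
      (integrableOn_mul_of_hasCompactSupport (hw.1.eval a) hdφ hdφs),
    integral_add
      (integrableOn_mul_of_hasCompactSupport ((hu.2.1.eval a).eval i) hφ.continuous hφs)
      (integrableOn_mul_of_hasCompactSupport ((hw.2.1.eval a).eval i) hφ.continuous hφs),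
    hu.2.2 φ hφ hφs hφΩ a i, hw.2.2 φ hφ hφs hφΩ a i, neg_add]

theorem HasWeakDerivOn.const_smul {u : EVec n → ι → ℝ} {Du : EVec n → ι → Fin n → ℝ}
    (hu : HasWeakDerivOn Ω u Du) (c : ℝ) :
    HasWeakDerivOn Ω (fun x => c • u x) (fun x => c • Du x) := by
  refine ⟨hu.1.smul c, hu.2.1.smul c, fun φ hφ hφs hφΩ a i => ?_⟩
  simp only [Pi.smul_apply, smul_eq_mul, mul_assoc, integral_const_mul,
    hu.2.2 φ hφ hφs hφΩ a i, mul_neg]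

end WeakDerivative

section Duality

variable {n N : ℕ} {Ω : Set (EVec n)} {F : (Fin N → Fin n → ℝ) → ℝ}
  {T₀ χ Du Dw : EVec n → Fin N → Fin n → ℝ}

theorem hasDerivAt_FFgen_line (hΩ : MeasurableSet Ω) (hF : ContDiff ℝ 1 F) {L M : ℝ}
    (hDF : ∀ z, mnorm (DFmat F z) ≤ L) (hT : AEStronglyMeasurable T₀ (volume.restrict Ω))
    (hTM : ∀ x ∈ Ω, mnorm (T₀ x) ≤ M) (hDu : AEStronglyMeasurable Du (volume.restrict Ω))
    (hint : IntegrableOn (fun x => F (Du x) - mdot (T₀ x) (Du x)) Ω)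
    (hDw : IntegrableOn Dw Ω) :
    HasDerivAt (fun t : ℝ => FFgen Ω F T₀ (fun x => Du x + t • Dw x))
      (∫ x in Ω, mdot (DFmat F (Du x) - T₀ x) (Dw x)) 0 := by
  have hline (t : ℝ) : AEStronglyMeasurable (fun x => Du x + t • Dw x) (volume.restrict Ω) :=
    hDu.add (hDw.1.const_smul t)
  have h := hasDerivAt_integral_of_dominated_loc_of_deriv_le (x₀ := 0) univ_mem
    (F := fun t x => F (Du x + t • Dw x) - mdot (T₀ x) (Du x + t • Dw x))
    (F' := fun t x => mdot (DFmat F (Du x + t • Dw x) - T₀ x) (Dw x))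
    (bound := fun x => (L + M) * mnorm (Dw x))
    (Eventually.of_forall fun t =>
      (hF.continuous.comp_aestronglyMeasurable (hline t)).sub (hT.mdot (hline t)))
    (by simp only [zero_smul, add_zero]; exact hint)
    ((((continuous_DFmat hF).comp_aestronglyMeasurable (hline 0)).sub hT).mdot hDw.1)
    (by
      filter_upwards [ae_restrict_mem hΩ] with x hx t _
      exact (abs_mdot_le _ _).trans (mul_le_mul_of_nonneg_right
        ((mnorm_sub_le _ _).trans (add_le_add (hDF _) (hTM x hx))) (mnorm_nonneg _)))
    ((integrable_mnorm hDw).const_mul _)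
    (Eventually.of_forall fun x t _ =>
      hasDerivAt_sub_mdot_line (hF.differentiable one_ne_zero) (T₀ x) (Du x) (Dw x) t)
  simp only [zero_smul, add_zero] at h
  exact h.2

theorem integral_mdot_DFmat_sub_eq_zero (hΩ : MeasurableSet Ω) (hF : ContDiff ℝ 1 F)
    {L M : ℝ} (hDF : ∀ z, mnorm (DFmat F z) ≤ L)
    (hT : AEStronglyMeasurable T₀ (volume.restrict Ω)) (hTM : ∀ x ∈ Ω, mnorm (T₀ x) ≤ M)
    {u w : EVec n → Fin N → ℝ} (hu : HasWeakDerivOn Ω u Du)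
    (hint : IntegrableOn (fun x => F (Du x) - mdot (T₀ x) (Du x)) Ω)
    (hmin : ∀ (w : EVec n → Fin N → ℝ) (Dw : EVec n → Fin N → Fin n → ℝ),
      HasWeakDerivOn Ω w Dw → FFgen Ω F T₀ Du ≤ FFgen Ω F T₀ Dw)
    (hw : HasWeakDerivOn Ω w Dw) :
    ∫ x in Ω, mdot (DFmat F (Du x) - T₀ x) (Dw x) = 0 := by
  refine IsLocalMin.hasDerivAt_eq_zero (Eventually.of_forall fun t => ?_)
    (hasDerivAt_FFgen_line hΩ hF hDF hT hTM hu.2.1.1 hint hw.2.1)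
  simpa only [zero_smul, add_zero] using hmin _ _ (hu.add (hw.const_smul t))

theorem integral_youngBound_eq [IsFiniteMeasure (volume.restrict Ω)]
    (hF : IntegrableOn (fun x => F (Dw x)) Ω)
    (hT : IntegrableOn (fun x => mdot (T₀ x) (Dw x)) Ω)
    (hχ : IntegrableOn (fun x => mdot (χ x) (Dw x)) Ω)
    (hperp : ∫ x in Ω, mdot (χ x) (Dw x) = 0) :
    IntegrableOn (fun x => youngBound F (T₀ x + χ x) (Dw x)) Ω ∧
      ∫ x in Ω, youngBound F (T₀ x + χ x) (Dw x) =
        F 0 * (volume Ω).toReal - FFgen Ω F T₀ Dw := by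
  have hFT : IntegrableOn (fun x => F (Dw x) - mdot (T₀ x) (Dw x)) Ω := hF.sub hT
  have hχFT : IntegrableOn (fun x => mdot (χ x) (Dw x) - (F (Dw x) - mdot (T₀ x) (Dw x))) Ω :=
    hχ.sub hFT
  have hsplit : (fun x => youngBound F (T₀ x + χ x) (Dw x)) =
      fun x => mdot (χ x) (Dw x) - (F (Dw x) - mdot (T₀ x) (Dw x)) + F 0 := by
    ext x
    rw [youngBound, mdot_add_left]
    ring
  rw [hsplit, integral_add hχFT (integrable_const _), integral_sub hχ hFT, hperp,
    setIntegral_const, FFgen, smul_eq_mul, measureReal_def]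
  exact ⟨hχFT.add (integrable_const _), by ring⟩

theorem Rdual_le_FFgen [IsFiniteMeasure (volume.restrict Ω)]
    (hF : IntegrableOn (fun x => F (Dw x)) Ω)
    (hT : IntegrableOn (fun x => mdot (T₀ x) (Dw x)) Ω)
    (hχ : IntegrableOn (fun x => mdot (χ x) (Dw x)) Ω)
    (hperp : ∫ x in Ω, mdot (χ x) (Dw x) = 0) :
    Rdual Ω F T₀ χ ≤ FFgen Ω F T₀ Dw := by
  have hval := (integral_youngBound_eq hF hT hχ hperp).2
  refine (EReal.sub_le_sub le_rfl (EReal.coe_ennreal_le_coe_ennreal_iff.2 ?_)).trans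
    (EReal.coe_sub_ofReal_sub_le _ (FFgen Ω F T₀ Dw))
  rw [← hval]
  exact (ofReal_integral_le_lintegral_ofReal _).trans
    (lintegral_mono fun x => ofReal_youngBound_le_FstarShift _ _)

theorem ConvexOn.Rdual_DFmat_sub_eq_FFgen [IsFiniteMeasure (volume.restrict Ω)]
    (hconv : ConvexOn ℝ univ F) (hd : Differentiable ℝ F)
    (hF : IntegrableOn (fun x => F (Du x)) Ω)
    (hT : IntegrableOn (fun x => mdot (T₀ x) (Du x)) Ω)
    (hσ : IntegrableOn (fun x => mdot (DFmat F (Du x) - T₀ x) (Du x)) Ω)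
    (hperp : ∫ x in Ω, mdot (DFmat F (Du x) - T₀ x) (Du x) = 0) :
    Rdual Ω F T₀ (fun x => DFmat F (Du x) - T₀ x) = FFgen Ω F T₀ Du := by
  obtain ⟨hint, hval⟩ := integral_youngBound_eq hF hT hσ hperp
  simp only [add_sub_cancel] at hint hval
  have hnonneg (x : EVec n) : 0 ≤ youngBound F (DFmat F (Du x)) (Du x) :=
    hconv.youngBound_DFmat_nonneg (hd _)
  have hle : FFgen Ω F T₀ Du ≤ F 0 * (volume Ω).toReal := by
    linarith [integral_nonneg (μ := volume.restrict Ω)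
      (f := fun x => youngBound F (DFmat F (Du x)) (Du x)) hnonneg]
  rw [Rdual, ← EReal.coe_sub_ofReal_sub_of_le hle, ← hval,
    ofReal_integral_eq_lintegral_ofReal hint (Eventually.of_forall hnonneg)]
  simp only [add_sub_cancel, hconv.FstarShift_DFmat (hd _)]

theorem eq_DFmat_sub_of_Rdual_eq [IsFiniteMeasure (volume.restrict Ω)]
    (hd : Differentiable ℝ F) (hTm : AEStronglyMeasurable T₀ (volume.restrict Ω))
    (hχm : AEStronglyMeasurable χ (volume.restrict Ω))
    (hF : IntegrableOn (fun x => F (Du x)) Ω)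
    (hT : IntegrableOn (fun x => mdot (T₀ x) (Du x)) Ω)
    (hχ : IntegrableOn (fun x => mdot (χ x) (Du x)) Ω)
    (hperp : ∫ x in Ω, mdot (χ x) (Du x) = 0) (heq : Rdual Ω F T₀ χ = FFgen Ω F T₀ Du) :
    χ =ᵐ[volume.restrict Ω] fun x => DFmat F (Du x) - T₀ x := by
  obtain ⟨hint, hval⟩ := integral_youngBound_eq hF hT hχ hperp
  obtain ⟨hle, hlint⟩ := EReal.le_and_eq_ofReal_of_coe_sub_eq heq
  have hae := ae_eq_ofReal_of_lintegral_le (f := fun x => FstarShift F (T₀ x + χ x))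
    (measurable_FstarShift.comp_aemeasurable (hTm.add hχm).aemeasurable) hint
    (by linarith) (Eventually.of_forall fun x => ofReal_youngBound_le_FstarShift _ _)
    (by rw [hlint, hval])
  filter_upwards [hae] with x ⟨hx0, hx⟩
  rw [eq_sub_iff_add_eq']
  exact eq_DFmat_of_FstarShift_le (hd _) hx0 hx.le

end Duality

theorem dual_solution_from_minimiser_general
    {n N : ℕ} (Ω : Set (EVec n))
    (hΩ : IsLipschitzDomain Ω) (hΩbdd : Bornology.IsBounded Ω)
    (ν L : ℝ) (hν : 0 < ν) (hνL : ν ≤ L)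
    (F : (Fin N → Fin n → ℝ) → ℝ)
    (hFC1 : ContDiff ℝ 1 F)
    (hFconv : ConvexOn ℝ Set.univ F)
    (hFgrowth : ∀ z, ν * mnorm z - L ≤ F z ∧ F z ≤ L * (1 + mnorm z))
    (T₀ : EVec n → Fin N → Fin n → ℝ)
    (hTmeas : AEStronglyMeasurable T₀ (volume.restrict Ω))
    (hTbdd : ∃ M : ℝ, ∀ x ∈ Ω, mnorm (T₀ x) ≤ M)
    (u : EVec n → Fin N → ℝ) (Du : EVec n → Fin N → Fin n → ℝ)
    (hu : HasWeakDerivOn Ω u Du)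
    (hmin : ∀ (w : EVec n → Fin N → ℝ) (Dw : EVec n → Fin N → Fin n → ℝ),
      HasWeakDerivOn Ω w Dw → FFgen Ω F T₀ Du ≤ FFgen Ω F T₀ Dw) :
    MemLinfPerp Ω (fun x => DFmat F (Du x) - T₀ x) ∧
    (∀ χ : EVec n → Fin N → Fin n → ℝ, MemLinfPerp Ω χ →
      Rdual Ω F T₀ χ ≤ Rdual Ω F T₀ (fun x => DFmat F (Du x) - T₀ x)) ∧
    (∀ χ : EVec n → Fin N → Fin n → ℝ, MemLinfPerp Ω χ →
      Rdual Ω F T₀ χ = Rdual Ω F T₀ (fun x => DFmat F (Du x) - T₀ x) →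
      χ =ᵐ[volume.restrict Ω] fun x => DFmat F (Du x) - T₀ x) := by
  obtain ⟨M, hM⟩ := hTbdd
  have hΩm : MeasurableSet Ω := hΩ.1.measurableSet
  have : IsFiniteMeasure (volume.restrict Ω) :=
    isFiniteMeasure_restrict.2 hΩbdd.measure_lt_top.ne
  have hL : 0 ≤ L := hν.le.trans hνL
  have hgrowth (z : Fin N → Fin n → ℝ) : F z ≤ L * (1 + mnorm z) := (hFgrowth z).2
  have hd : Differentiable ℝ F := hFC1.differentiable one_ne_zero
  have hDF (z : Fin N → Fin n → ℝ) : mnorm (DFmat F z) ≤ L :=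
    hFconv.mnorm_DFmat_le hL hgrowth (hd z)
  have hFDu : IntegrableOn (fun x => F (Du x)) Ω :=
    integrable_comp_of_abs_sub_le hFC1.continuous
      (fun z => by simpa using hFconv.abs_sub_le_mul_mnorm hL hgrowth 0 z) hu.2.1
  have hTDu := integrableOn_mdot_of_forall_mem_le hΩm hTmeas ⟨M, hM⟩ hu.2.1
  have hσ : MemLinfPerp Ω (fun x => DFmat F (Du x) - T₀ x) :=
    ⟨((continuous_DFmat hFC1).comp_aestronglyMeasurable hu.2.1.1).sub hTmeas,
      ⟨L + M, fun x hx => (mnorm_sub_le _ _).trans (add_le_add (hDF _) (hM x hx))⟩,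
      fun w Dw hw => integral_mdot_DFmat_sub_eq_zero hΩm hFC1 hDF hTmeas hM hu
        (hFDu.sub hTDu) hmin hw⟩
  have hstrong : Rdual Ω F T₀ (fun x => DFmat F (Du x) - T₀ x) = FFgen Ω F T₀ Du :=
    hFconv.Rdual_DFmat_sub_eq_FFgen hd hFDu hTDu
      (integrableOn_mdot_of_forall_mem_le hΩm hσ.1 hσ.2.1 hu.2.1) (hσ.2.2 u Du hu)
  refine ⟨hσ, fun χ hχ => ?_, fun χ hχ heq => ?_⟩
  · rw [hstrong]
    exact Rdual_le_FFgen hFDu hTDu (integrableOn_mdot_of_forall_mem_le hΩm hχ.1 hχ.2.1 hu.2.1)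
      (hχ.2.2 u Du hu)
  · exact eq_DFmat_sub_of_Rdual_eq hd hTmeas hχ.1 hFDu hTDu
      (integrableOn_mdot_of_forall_mem_le hΩm hχ.1 hχ.2.1 hu.2.1) (hχ.2.2 u Du hu)
      (heq.trans hstrong)

/-- **Lemma 4.10.** If `u ∈ W^{1,1}(Ω;ℝ^N)` minimises `𝓕[w] = ∫_Ω (F(∇w) − T₀·∇w) dx`,
then `σ = D_zF(∇u) − T₀` lies in `L^∞_⊥(Ω;ℝ^{N×n})` and is the unique maximiser of the
dual functional `ℛ_{T₀}[χ] = −∫_Ω F*(T₀+χ) dx` over `L^∞_⊥(Ω;ℝ^{N×n})`. -/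
theorem dual_solution_from_minimiser
    {n N : ℕ} (Ω : Set (EVec n))
    (hΩ : IsLipschitzDomain Ω) (hΩbdd : Bornology.IsBounded Ω)
    (ν L : ℝ) (hν : 0 < ν) (hνL : ν ≤ L)
    (F : (Fin N → Fin n → ℝ) → ℝ)
    (hFpos : ∀ z, 0 ≤ F z)
    (hFC1 : ContDiff ℝ 1 F)
    (hFconv : ConvexOn ℝ Set.univ F)
    (hFgrowth : ∀ z, ν * mnorm z - L ≤ F z ∧ F z ≤ L * (1 + mnorm z))
    (T₀ : EVec n → Fin N → Fin n → ℝ)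
    (hTmeas : AEStronglyMeasurable T₀ (volume.restrict Ω))
    (hTbdd : ∃ M : ℝ, ∀ x ∈ Ω, mnorm (T₀ x) ≤ M)
    (u : EVec n → Fin N → ℝ) (Du : EVec n → Fin N → Fin n → ℝ)
    (hu : HasWeakDerivOn Ω u Du)
    (hmin : ∀ (w : EVec n → Fin N → ℝ) (Dw : EVec n → Fin N → Fin n → ℝ),
      HasWeakDerivOn Ω w Dw → FFgen Ω F T₀ Du ≤ FFgen Ω F T₀ Dw) :
    MemLinfPerp Ω (fun x => DFmat F (Du x) - T₀ x) ∧
    (∀ χ : EVec n → Fin N → Fin n → ℝ, MemLinfPerp Ω χ →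
      Rdual Ω F T₀ χ ≤ Rdual Ω F T₀ (fun x => DFmat F (Du x) - T₀ x)) ∧
    (∀ χ : EVec n → Fin N → Fin n → ℝ, MemLinfPerp Ω χ →
      Rdual Ω F T₀ χ = Rdual Ω F T₀ (fun x => DFmat F (Du x) - T₀ x) →
      χ =ᵐ[volume.restrict Ω] fun x => DFmat F (Du x) - T₀ x) :=
  dual_solution_from_minimiser_general Ω hΩ hΩbdd ν L hν hνL F hFC1 hFconv hFgrowth T₀ hTmeas hTbdd
    u Du hu hmin
end
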